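/- Let X_1, ..., X_n (n ≥ 2) be i.i.d. random variables taking values in [0,1], with mean μ and variance σ². Then E[min{X_1, ..., X_n}] ≤ μ − σ². In particular, σ² ≤ μ. -/

import Mathlib

/-!
For an independent copy `Y` of `X`, `min X Y = (X + Y - |X - Y|) / 2`, so
`E[min X Y] = μ - E|X - Y| / 2`. On `[0,1]` we have `|X - Y| ≥ (X - Y)²`, and
`E[(X - Y)²] = Var(X - Y) = 2σ²` by independence. The minimum of all `n ≥ 2` variables
is at most `min X₀ X₁` and is nonnegative.
-/

open MeasureTheory ProbabilityTheory

lemma min_eq_add_sub_abs_sub_div_two (a b : ℝ) : min a b = (a + b - |a - b|) / 2 := by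
  rcases le_total a b with h | h
  · rw [min_eq_left h, abs_of_nonpos (sub_nonpos.mpr h)]; ring
  · rw [min_eq_right h, abs_of_nonneg (sub_nonneg.mpr h)]; ring

lemma sq_sub_le_abs_sub_of_mem_Icc {a b : ℝ} (ha : a ∈ Set.Icc (0 : ℝ) 1)
    (hb : b ∈ Set.Icc (0 : ℝ) 1) : (a - b) ^ 2 ≤ |a - b| := by
  have h₁ : |a - b| ≤ 1 :=
    abs_sub_le_iff.mpr ⟨by linarith [ha.2, hb.1], by linarith [ha.1, hb.2]⟩
  rw [← sq_abs]
  exact pow_le_of_le_one (abs_nonneg _) h₁ two_ne_zero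

namespace ProbabilityTheory

variable {Ω : Type*} [MeasurableSpace Ω] {P : Measure Ω} {X Y : Ω → ℝ}

lemma IdentDistrib.integral_min_eq (hid : IdentDistrib X Y P P) (hX : Integrable X P) :
    ∫ ω, min (X ω) (Y ω) ∂P = P[X] - (∫ ω, |X ω - Y ω| ∂P) / 2 := by
  have hY : Integrable Y P := hid.integrable_snd hX
  simp_rw [min_eq_add_sub_abs_sub_div_two]
  rw [integral_div, integral_sub (f := fun ω ↦ X ω + Y ω) (g := fun ω ↦ |X ω - Y ω|)
    (hX.add hY) (hX.sub hY).abs, integral_add hX hY, ← hid.integral_eq]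
  ring

lemma IndepFun.integral_sub_sq_eq_two_mul_variance [IsFiniteMeasure P] (hXY : IndepFun X Y P)
    (hid : IdentDistrib X Y P P) (hX : MemLp X 2 P) :
    ∫ ω, (X ω - Y ω) ^ 2 ∂P = 2 * Var[X; P] := by
  have hY : MemLp Y 2 P := hid.memLp_snd hX
  have hmean : P[X - Y] = 0 := by
    rw [integral_sub' (hX.integrable one_le_two) (hY.integrable one_le_two), hid.integral_eq,
      sub_self]
  calc ∫ ω, (X ω - Y ω) ^ 2 ∂P
      = Var[X - Y; P] :=
        (variance_of_integral_eq_zero (hX.aemeasurable.sub hY.aemeasurable) hmean).symm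
    _ = 2 * Var[X; P] := by
      rw [variance_sub hX hY, hXY.covariance_eq_zero hX hY, ← hid.variance_eq]
      ring

lemma IndepFun.integral_min_le_integral_sub_variance [IsFiniteMeasure P] (hXY : IndepFun X Y P)
    (hid : IdentDistrib X Y P P) (hX : ∀ᵐ ω ∂P, X ω ∈ Set.Icc (0 : ℝ) 1) :
    ∫ ω, min (X ω) (Y ω) ∂P ≤ P[X] - Var[X; P] := by
  have hY : ∀ᵐ ω ∂P, Y ω ∈ Set.Icc (0 : ℝ) 1 := hid.ae_mem_snd measurableSet_Icc hX
  have hXL : MemLp X 2 P := memLp_of_bounded hX hid.aestronglyMeasurable_fst 2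
  have hYL : MemLp Y 2 P := hid.memLp_snd hXL
  have hvar_le : 2 * Var[X; P] ≤ ∫ ω, |X ω - Y ω| ∂P := by
    rw [← hXY.integral_sub_sq_eq_two_mul_variance hid hXL]
    refine integral_mono_ae (hXL.sub hYL).integrable_sq
      ((hXL.sub hYL).integrable one_le_two).abs ?_
    filter_upwards [hX, hY] with ω hXω hYω using sq_sub_le_abs_sub_of_mem_Icc hXω hYω
  rw [hid.integral_min_eq (hXL.integrable one_le_two)]
  linarith

end ProbabilityTheory

/-- If `X 0, ..., X (n-1)` (`n ≥ 2`) are i.i.d. random variables with values in `[0,1]`,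
mean `μ`, and variance `σ²`, then `E[min X_i] ≤ μ - σ²`; in particular `σ² ≤ μ`. -/
theorem expected_min_le_mean_sub_variance (n : ℕ) (hn : 2 ≤ n)
    {Ω : Type*} [MeasurableSpace Ω] (P : Measure Ω) [IsProbabilityMeasure P]
    (X : Fin n → Ω → ℝ) (hmeas : ∀ i, Measurable (X i))
    (hrange : ∀ i ω, X i ω ∈ Set.Icc (0 : ℝ) 1)
    (hindep : iIndepFun X P)
    (hident : ∀ i, Measure.map (X i) P = Measure.map (X ⟨0, by omega⟩) P)
    (μ σ2 : ℝ)
    (hμ : μ = ∫ ω, X ⟨0, by omega⟩ ω ∂P)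
    (hσ2 : σ2 = variance (X ⟨0, by omega⟩) P) :
    (∫ ω, Finset.univ.inf' (Finset.univ_nonempty_iff.mpr ⟨⟨0, by omega⟩⟩)
        (fun i => X i ω) ∂P) ≤ μ - σ2 ∧ σ2 ≤ μ := by
  set i₀ : Fin n := ⟨0, by omega⟩
  set i₁ : Fin n := ⟨1, by omega⟩
  set m : Ω → ℝ := fun ω ↦
    Finset.univ.inf' (Finset.univ_nonempty_iff.mpr ⟨i₀⟩) (fun i ↦ X i ω)
  have hm_nonneg : ∀ ω, 0 ≤ m ω := fun ω ↦ Finset.le_inf' _ _ fun i _ ↦ (hrange i ω).1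
  have hm_le : ∀ ω, m ω ≤ min (X i₀ ω) (X i₁ ω) := fun ω ↦
    le_min (Finset.inf'_le _ (Finset.mem_univ i₀)) (Finset.inf'_le _ (Finset.mem_univ i₁))
  have hindep₀₁ : IndepFun (X i₀) (X i₁) P :=
    hindep.indepFun (by simp [i₀, i₁, Fin.ext_iff])
  have hident₀₁ : IdentDistrib (X i₀) (X i₁) P P :=
    ⟨(hmeas i₀).aemeasurable, (hmeas i₁).aemeasurable, (hident i₁).symm⟩
  have hint (i : Fin n) : Integrable (X i) P :=
    (memLp_of_bounded (ae_of_all _ (hrange i)) (hmeas i).aestronglyMeasurable 1).integrable le_rfl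
  have hm : ∫ ω, m ω ∂P ≤ μ - σ2 := by
    calc ∫ ω, m ω ∂P ≤ ∫ ω, min (X i₀ ω) (X i₁ ω) ∂P :=
          integral_mono_of_nonneg (ae_of_all _ hm_nonneg) ((hint i₀).inf (hint i₁))
            (ae_of_all _ hm_le)
      _ ≤ μ - σ2 := hμ ▸ hσ2 ▸ hindep₀₁.integral_min_le_integral_sub_variance hident₀₁
          (ae_of_all _ (hrange i₀))
  exact ⟨hm, sub_nonneg.mp ((integral_nonneg hm_nonneg).trans hm)⟩
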